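/- Let p(c, x₁) be a real polynomial of degree n ≥ 1 in c with Rₙ = Res(p, ∂p/∂c; c) not identically zero. Suppose Rₙ(β) ≠ 0 and the set C_β = {c ∈ ℝ : p(c, β) = 0} is empty. Then for every β' in the same connected component of ℝ \ Z(Rₙ) as β, the set C_{β'} is also empty; in particular there is no point (c, x₁) on the curve p = 0 with x₁ = β'. -/

import Mathlib

open Polynomial Filter

/-- The Sylvester matrix of `f` and `g`, viewed as polynomials of formal degrees
`m` and `k` respectively: `k` shifted rows of coefficients of `f` followed by
`m` shifted rows of coefficients of `g`. -/
noncomputable def sylvester {R : Type*} [CommRing R] (m k : ℕ) (f g : Polynomial R) :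
    Matrix (Fin (k + m)) (Fin (k + m)) R :=
  Matrix.of fun i j =>
    if (i : ℕ) < k then (if (i : ℕ) ≤ (j : ℕ) then f.coeff ((j : ℕ) - (i : ℕ)) else 0)
    else (if (i : ℕ) - k ≤ (j : ℕ) then g.coeff ((j : ℕ) - ((i : ℕ) - k)) else 0)

/-- The resultant of `f` and `g` with formal degrees `m` and `k`. -/
noncomputable def resultant {R : Type*} [CommRing R] (m k : ℕ) (f g : Polynomial R) : R :=
  (sylvester m k f g).det

/-- Evaluation at `(c, x)` of a bivariate polynomial `p ∈ ℝ[x][c]`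
(outer variable `c`, coefficients in `ℝ[x]`). -/
noncomputable def evalCX (c x : ℝ) (p : Polynomial (Polynomial ℝ)) : ℝ :=
  (p.map (Polynomial.evalRingHom x)).eval c

/-! Where `Rₙ(x) ≠ 0`, the leading coefficient `pₙ(x)` does not vanish and every real root of
`c ↦ p(c, x)` is simple: a drop in degree, or a common root of `p` and `∂p/∂c`, would make the
Sylvester determinant vanish. A simple root changes sign, so by the intermediate value theorem it
survives small perturbations of `x`; a nonvanishing leading coefficient bounds the roots locally
uniformly (Cauchy's bound), so by compactness a limit of points with a root has a root. Hence the
set of `x` over which the curve has a point is relatively open and closed in `{Rₙ ≠ 0}`, and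
contains or misses each connected component entirely. -/

open Set Topology

namespace Polynomial

variable {R S : Type*} [CommRing R] [CommRing S]

theorem resultant_eq_zero_of_isRoot {f g : R[X]} {m n : ℕ} (hf : f.natDegree ≤ m)
    (hg : g.natDegree ≤ n) (hmn : m ≠ 0 ∨ n ≠ 0) {c : R} (hfc : f.IsRoot c)
    (hgc : g.IsRoot c) :
    resultant f g m n = 0 := by
  obtain ⟨a, b, -, -, h⟩ := exists_mul_add_mul_eq_C_resultant f g hf hg hmn
  simpa [hfc.eq_zero, hgc.eq_zero] using (congr_arg (eval c) h).symm

theorem resultant_derivative_eq_zero_of_coeff_eq_zero {f : R[X]} {n : ℕ} (hn : 1 ≤ n)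
    (hf : f.natDegree ≤ n) (h : f.coeff n = 0) :
    resultant (derivative f) f (n - 1) n = 0 := by
  obtain ⟨k, rfl⟩ : ∃ k, n = k + 1 := ⟨n - 1, by omega⟩
  have hfk : f.natDegree ≤ k := natDegree_le_pred hf h
  rw [Nat.add_sub_cancel, resultant_add_right_deg _ _ _ _ 1 hfk, coeff_derivative, h]
  simp

end Polynomial

section Resultant

variable {R S : Type*} [CommRing R] [CommRing S]

theorem sylvester_eq_transpose {f g : R[X]} {m k : ℕ} (hf : f.natDegree ≤ m)
    (hg : g.natDegree ≤ k) : sylvester m k f g = (Polynomial.sylvester g f k m).transpose := by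
  ext i j
  induction i using Fin.addCases with
  | left i =>
    simp only [_root_.sylvester, Polynomial.sylvester, Matrix.of_apply, Matrix.transpose_apply,
      Fin.addCases_left, Fin.val_castAdd, i.isLt, if_true, mem_Icc]
    split_ifs <;> first | rfl | omega | exact coeff_eq_zero_of_natDegree_lt (by omega)
  | right i =>
    simp only [_root_.sylvester, Polynomial.sylvester, Matrix.of_apply, Matrix.transpose_apply,
      Fin.addCases_right, Fin.val_natAdd, mem_Icc, Nat.add_sub_cancel_left]
    split_ifs <;> first | rfl | omega | exact coeff_eq_zero_of_natDegree_lt (by omega)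

theorem resultant_eq_polynomial_resultant {f g : R[X]} {m k : ℕ} (hf : f.natDegree ≤ m)
    (hg : g.natDegree ≤ k) : resultant m k f g = Polynomial.resultant g f k m := by
  rw [_root_.resultant, sylvester_eq_transpose hf hg, Matrix.det_transpose, Polynomial.resultant]

variable {f : R[X]} {n : ℕ}

theorem map_resultant_derivative (φ : R →+* S) (hf : f.natDegree ≤ n) :
    φ (resultant n (n - 1) f (derivative f)) =
      Polynomial.resultant (derivative (f.map φ)) (f.map φ) (n - 1) n := by
  rw [resultant_eq_polynomial_resultant hf ((natDegree_derivative_le f).trans (by omega)),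
    ← resultant_map_map, derivative_map]

theorem map_coeff_ne_zero_of_map_resultant_derivative_ne_zero (φ : R →+* S) (hn : 1 ≤ n)
    (hf : f.natDegree ≤ n) (h : φ (resultant n (n - 1) f (derivative f)) ≠ 0) :
    φ (f.coeff n) ≠ 0 := by
  rw [map_resultant_derivative φ hf] at h
  rw [← coeff_map]
  exact mt (resultant_derivative_eq_zero_of_coeff_eq_zero hn (natDegree_map_le.trans hf)) h

theorem not_isRoot_derivative_map_of_map_resultant_derivative_ne_zero (φ : R →+* S)
    (hn : 1 ≤ n) (hf : f.natDegree ≤ n) (h : φ (resultant n (n - 1) f (derivative f)) ≠ 0)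
    {c : S} (hc : (f.map φ).IsRoot c) : ¬ (derivative (f.map φ)).IsRoot c := by
  have hfφ : (f.map φ).natDegree ≤ n := natDegree_map_le.trans hf
  refine fun hc' ↦ h ?_
  rw [map_resultant_derivative φ hf]
  exact resultant_eq_zero_of_isRoot ((natDegree_derivative_le _).trans (by omega)) hfφ
    (Or.inr (by omega)) hc' hc

end Resultant

theorem Polynomial.IsRoot.norm_lt_sum_norm_coeff_div_add_one {K : Type*} [NormedDivisionRing K]
    {q : K[X]} (hq : q ≠ 0) {a : K} (ha : q.IsRoot a) :
    ‖a‖ < (∑ i ∈ Finset.range q.natDegree, ‖q.coeff i‖) / ‖q.leadingCoeff‖ + 1 := by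
  have hsup : (Finset.range q.natDegree).sup (‖q.coeff ·‖₊) ≤
      ∑ i ∈ Finset.range q.natDegree, ‖q.coeff i‖₊ :=
    Finset.sup_le fun i hi ↦
      Finset.single_le_sum (f := fun i ↦ ‖q.coeff i‖₊) (fun _ _ ↦ zero_le) hi
  have hbound : cauchyBound q ≤ (∑ i ∈ Finset.range q.natDegree, ‖q.coeff i‖₊) /
      ‖q.leadingCoeff‖₊ + 1 := by
    unfold cauchyBound
    gcongr
  have := (ha.norm_lt_cauchyBound hq).trans_le hbound
  rw [← NNReal.coe_lt_coe] at this
  simpa using this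

theorem exists_mul_neg_of_hasDerivAt {f : ℝ → ℝ} {f' x₀ : ℝ} (hf : HasDerivAt f f' x₀)
    (hf' : f' ≠ 0) (hx₀ : f x₀ = 0) : ∃ a b, f a * f b < 0 := by
  -- `f' * f` has positive derivative `f' ^ 2`, so it is negative just left and positive just right
  have hslope : ∀ᶠ x in 𝓝[≠] x₀, 0 < slope (fun x ↦ f' * f x) x₀ x :=
    (hasDerivAt_iff_tendsto_slope.mp (hf.const_mul f')).eventually
      (eventually_gt_nhds (mul_self_pos.2 hf'))
  obtain ⟨a, ha, hax⟩ :=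
    ((hslope.filter_mono (nhdsLT_le_nhdsNE x₀)).and self_mem_nhdsWithin).exists
  obtain ⟨b, hb, hxb⟩ :=
    ((hslope.filter_mono (nhdsGT_le_nhdsNE x₀)).and self_mem_nhdsWithin).exists
  have hfa : f' * f a < 0 := neg_of_slope_pos (f := fun x ↦ f' * f x) hax ha (by simp [hx₀])
  have hfb : 0 < f' * f b := pos_of_slope_pos (f := fun x ↦ f' * f x) hxb hb (by simp [hx₀])
  have hprod : f' * f' * (f a * f b) < 0 := by linarith [mul_neg_of_neg_of_pos hfa hfb]
  exact ⟨a, b, neg_of_mul_neg_right hprod (mul_self_nonneg f')⟩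

theorem eventually_exists_eq_zero_of_mul_neg {X : Type*} [TopologicalSpace X] {F : X × ℝ → ℝ}
    (hF : Continuous F) {x : X} {a b : ℝ} (hab : F (x, a) * F (x, b) < 0) :
    ∀ᶠ y in 𝓝 x, ∃ c, F (y, c) = 0 := by
  have hcont : Continuous fun y ↦ F (y, a) * F (y, b) := by fun_prop
  filter_upwards [hcont.continuousAt.eventually_lt continuousAt_const hab] with y hy
  have hzero : (0 : ℝ) ∈ uIcc (F (y, a)) (F (y, b)) := by
    rcases mul_neg_iff.mp hy with ⟨ha, hb⟩ | ⟨ha, hb⟩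
    · exact mem_uIcc_of_ge hb.le ha.le
    · exact mem_uIcc_of_le ha.le hb.le
  have hFy : Continuous fun c ↦ F (y, c) := by fun_prop
  obtain ⟨c, -, hc⟩ := intermediate_value_uIcc hFy.continuousOn hzero
  exact ⟨c, hc⟩

theorem mem_image_fst_of_mem_closure {X Y : Type*} [TopologicalSpace X] [TopologicalSpace Y]
    {Z : Set (X × Y)} (hZ : IsClosed Z) {K : Set Y} (hK : IsCompact K) {x : X}
    (hZK : ∀ᶠ y in 𝓝 x, ∀ c, (y, c) ∈ Z → c ∈ K) (hx : x ∈ closure (Prod.fst '' Z)) :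
    x ∈ Prod.fst '' Z := by
  by_contra hxZ
  have hnear : ∀ᶠ y in 𝓝 x, ∀ c ∈ K, (y, c) ∉ Z :=
    hK.eventually_forall_of_forall_eventually fun c _ ↦
      hZ.isOpen_compl.mem_nhds fun h ↦ hxZ ⟨(x, c), h, rfl⟩
  obtain ⟨y, ⟨⟨y, c⟩, hyc, rfl⟩, hyK, hyZ⟩ :=
    ((mem_closure_iff_frequently.1 hx).and_eventually (hZK.and hnear)).exists
  exact hyZ c (hyK c hyc) hyc

theorem continuous_evalCX (p : ℝ[X][X]) : Continuous fun z : ℝ × ℝ ↦ evalCX z.2 z.1 p := by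
  simp only [evalCX, eval_map, eval₂_eq_sum_range, coe_evalRingHom]
  exact continuous_finsetSum _ fun i _ ↦
    ((p.coeff i).continuous.comp continuous_fst).mul (continuous_snd.pow i)

section Fibers

variable {p : ℝ[X][X]} {n : ℕ}

theorem eventually_exists_evalCX_eq_zero (hn : 1 ≤ n) (hp : p.natDegree ≤ n) {x : ℝ}
    (hx : (resultant n (n - 1) p (derivative p)).eval x ≠ 0) {c : ℝ}
    (hc : evalCX c x p = 0) :
    ∀ᶠ y in 𝓝 x, ∃ c, evalCX c y p = 0 := by
  have hsimple :=
    not_isRoot_derivative_map_of_map_resultant_derivative_ne_zero (evalRingHom x) hn hp hx hc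
  obtain ⟨a, b, hab⟩ :=
    exists_mul_neg_of_hasDerivAt ((p.map (evalRingHom x)).hasDerivAt c) hsimple hc
  exact eventually_exists_eq_zero_of_mul_neg (F := fun z ↦ evalCX z.2 z.1 p)
    (continuous_evalCX p) hab

theorem exists_eventually_abs_lt_of_evalCX_eq_zero (hp : p.natDegree ≤ n) {x : ℝ}
    (hx : (p.coeff n).eval x ≠ 0) : ∃ B, ∀ᶠ y in 𝓝 x, ∀ c, evalCX c y p = 0 → |c| < B := by
  set bound : ℝ → ℝ := fun y ↦
    (∑ i ∈ Finset.range n, |(p.coeff i).eval y|) / |(p.coeff n).eval y| + 1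
  have hcont : ContinuousAt bound x := by fun_prop (disch := simpa using hx)
  refine ⟨bound x + 1, ?_⟩
  filter_upwards [hcont.eventually_lt continuousAt_const (lt_add_one _),
    (p.coeff n).continuous.continuousAt.eventually_ne hx] with y hy hyn c hc
  have hdeg : (p.map (evalRingHom y)).natDegree = n :=
    natDegree_eq_of_le_of_coeff_ne_zero (natDegree_map_le.trans hp) (by simpa using hyn)
  have hne : p.map (evalRingHom y) ≠ 0 := fun h ↦ hyn (by simpa using congr_arg (coeff · n) h)
  have hc_lt := IsRoot.norm_lt_sum_norm_coeff_div_add_one hne hc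
  simp only [hdeg, leadingCoeff, coeff_map, coe_evalRingHom, Real.norm_eq_abs] at hc_lt
  linarith

theorem exists_evalCX_eq_zero_of_mem_closure (hp : p.natDegree ≤ n) {x : ℝ}
    (hx : (p.coeff n).eval x ≠ 0) (hcl : x ∈ closure {y | ∃ c, evalCX c y p = 0}) :
    ∃ c, evalCX c x p = 0 := by
  obtain ⟨B, hB⟩ := exists_eventually_abs_lt_of_evalCX_eq_zero hp hx
  have hZ : IsClosed {z : ℝ × ℝ | evalCX z.2 z.1 p = 0} :=
    isClosed_eq (continuous_evalCX p) continuous_const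
  have himage :
      Prod.fst '' {z : ℝ × ℝ | evalCX z.2 z.1 p = 0} = {y | ∃ c, evalCX c y p = 0} := by
    ext y
    simp
  change x ∈ {y | ∃ c, evalCX c y p = 0}
  rw [← himage] at hcl ⊢
  exact mem_image_fst_of_mem_closure hZ (isCompact_closedBall 0 B)
    (hB.mono fun y hy c hc ↦ mem_closedBall_zero_iff.2 (hy c hc).le) hcl

end Fibers

theorem statement3_general (p : Polynomial (Polynomial ℝ)) (n : ℕ) (hn : 1 ≤ n)
    (hdeg : p.natDegree = n)
    (R : Polynomial ℝ) (hRdef : R = resultant n (n - 1) p (Polynomial.derivative p))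
    (β : ℝ) (hβ : R.eval β ≠ 0)
    (hempty : {c : ℝ | evalCX c β p = 0} = ∅)
    (β' : ℝ) (hβ' : β' ∈ connectedComponentIn {x : ℝ | R.eval x ≠ 0} β) :
    {c : ℝ | evalCX c β' p = 0} = ∅ := by
  subst hRdef
  set S := {x : ℝ | (resultant n (n - 1) p (derivative p)).eval x ≠ 0}
  set E := {x : ℝ | ∃ c, evalCX c x p = 0}
  have hopen : ∀ x ∈ S, x ∈ E → x ∈ interior E := fun x hx ⟨_, hc⟩ ↦
    mem_interior_iff_mem_nhds.2 (eventually_exists_evalCX_eq_zero hn hdeg.le hx hc)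
  have hclosed : ∀ x ∈ S, x ∈ closure E → x ∈ E := fun x hx ↦
    exists_evalCX_eq_zero_of_mem_closure hdeg.le
      (map_coeff_ne_zero_of_map_resultant_derivative_ne_zero (evalRingHom x) hn hdeg.le hx)
  refine eq_empty_iff_forall_notMem.2 fun c hc ↦ ?_
  have hcomp : connectedComponentIn S β ⊆ interior E := by
    refine isPreconnected_connectedComponentIn.subset_of_closure_inter_subset isOpen_interior
      ⟨β', hβ', hopen β' (connectedComponentIn_subset _ _ hβ') ⟨c, hc⟩⟩ ?_
    rintro x ⟨hx, hxC⟩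
    have hxS := connectedComponentIn_subset _ _ hxC
    exact hopen x hxS (hclosed x hxS (closure_mono interior_subset hx))
  obtain ⟨c₀, hc₀⟩ := interior_subset (hcomp (mem_connectedComponentIn hβ))
  exact eq_empty_iff_forall_notMem.1 hempty c₀ hc₀

/-- if the resultant `Rₙ` does not vanish at `β` and the fiber
`C_β = {c : p(c, β) = 0}` is empty, then for every `β'` in the same connected
component of the complement of the zero set of `Rₙ` as `β`, the fiber `C_{β'}`
is also empty: there is no point `(c, x₁)` on the curve `p = 0` with `x₁ = β'`. -/
theorem statement3 (p : Polynomial (Polynomial ℝ)) (n : ℕ) (hn : 1 ≤ n)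
    (hdeg : p.natDegree = n)
    (R : Polynomial ℝ) (hRdef : R = resultant n (n - 1) p (Polynomial.derivative p))
    (hR0 : R ≠ 0)
    (β : ℝ) (hβ : R.eval β ≠ 0)
    (hempty : {c : ℝ | evalCX c β p = 0} = ∅)
    (β' : ℝ) (hβ' : β' ∈ connectedComponentIn {x : ℝ | R.eval x ≠ 0} β) :
    {c : ℝ | evalCX c β' p = 0} = ∅ :=
  statement3_general p n hn hdeg R hRdef β hβ hempty β' hβ'
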